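/- arXiv:2405.15492 — 10 statements merged into one kernel-verified Lean document; each statement's English description precedes it below -/
import Mathlib

section
/- Let G be a simple graph on a finite vertex set V and let A ⊆ V. Then the cut of G at A has an induced matching of size 2 if and only if the cut of the complement graph of G at A has an induced matching of size 2. Equivalently, the maximum induced matching in the cut of G at A has size at most 1 if and only if the same holds in the complement of G. (This is the core of the fact that a graph has mim-width at most 1 if and only if its complement has mim-width at most 1.) -/
/-- An induced matching in the cut of `G` at `A`, witnessed by endpoint functions `x` (inside `A`)
and `y` (outside `A`). -/
def IsCutIM {V : Type*} (G : SimpleGraph V) (A : Set V) {k : ℕ} (x y : Fin k → V) : Prop :=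
  Function.Injective x ∧ Function.Injective y ∧
    (∀ i, x i ∈ A) ∧ (∀ i, y i ∉ A) ∧
    (∀ i, G.Adj (x i) (y i)) ∧ (∀ i j, i ≠ j → ¬ G.Adj (x i) (y j))

/-- The cut of `G` at `A` has an induced matching of size `k`. -/
def CutIM {V : Type*} (G : SimpleGraph V) (A : Set V) (k : ℕ) : Prop :=
  ∃ x y : Fin k → V, IsCutIM G A x y

lemma cutIM_compl_of_cutIM {V : Type*} (G : SimpleGraph V) (A : Set V)
    (h : CutIM G A 2) : CutIM Gᶜ A 2 := by
  obtain ⟨x, y, hxinj, hyinj, hxA, hyA, hadj, hnon⟩ := h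
  have hswap : ∀ i : Fin 2, i ≠ Equiv.swap (0 : Fin 2) 1 i := by decide
  refine ⟨x, y ∘ Equiv.swap 0 1, hxinj, hyinj.comp (Equiv.swap 0 1).injective,
    hxA, fun i => hyA _, fun i => ?_, fun i j hij => ?_⟩
  · refine ⟨fun he => (hyA _) (he ▸ hxA i), hnon _ _ (hswap i)⟩
  · have : Equiv.swap (0 : Fin 2) 1 j = i := by
      revert hij; revert i j; decide
    simp only [Function.comp, this]
    intro hc
    exact hc.2 (hadj i)

theorem stmt_1 {V : Type*} [Fintype V] (G : SimpleGraph V) (A : Set V) :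
    (CutIM G A 2 ↔ CutIM Gᶜ A 2) ∧ (¬ CutIM G A 2 ↔ ¬ CutIM Gᶜ A 2) := by
  have h1 : CutIM G A 2 ↔ CutIM Gᶜ A 2 := by
    constructor
    · exact cutIM_compl_of_cutIM G A
    · intro h
      have := cutIM_compl_of_cutIM Gᶜ A h
      rwa [compl_compl] at this
  exact ⟨h1, not_congr h1⟩
end

section
/- Let G be a simple graph on a finite vertex set V and let A ⊆ V be nonempty. The following are equivalent: (i) the cut of G at A has no induced matching of size 2; (ii) for all v, w ∈ A, either N(v) ∖ A ⊆ N(w) ∖ A or N(w) ∖ A ⊆ N(v) ∖ A, where N denotes the open neighborhood in G; (iii) there exists a chain order on A, i.e., a linear order < on A such that for all v, w ∈ A, v < w implies N(v) ∖ A ⊆ N(w) ∖ A. (This is the characterization of mim-width-1 cuts as chain graphs and the existence of chain orders.) -/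
/-- `lt` is a chain order on `A`: a (strict) linear order on `A` such that `v < w` implies
`N(v) ∖ A ⊆ N(w) ∖ A`. -/
structure ChainOrderOn {V : Type*} (G : SimpleGraph V) (A : Set V) (lt : V → V → Prop) : Prop where
  trans : ∀ ⦃a⦄, a ∈ A → ∀ ⦃b⦄, b ∈ A → ∀ ⦃c⦄, c ∈ A → lt a b → lt b c → lt a c
  irrefl : ∀ a ∈ A, ¬ lt a a
  total : ∀ a ∈ A, ∀ b ∈ A, a ≠ b → lt a b ∨ lt b a
  chain : ∀ a ∈ A, ∀ b ∈ A, lt a b → G.neighborSet a \ A ⊆ G.neighborSet b \ A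

theorem stmt_2 {V : Type*} [Fintype V] (G : SimpleGraph V) (A : Set V) (hA : A.Nonempty) :
    List.TFAE [
      ¬ CutIM G A 2,
      ∀ v ∈ A, ∀ w ∈ A,
        G.neighborSet v \ A ⊆ G.neighborSet w \ A ∨ G.neighborSet w \ A ⊆ G.neighborSet v \ A,
      ∃ lt : V → V → Prop, ChainOrderOn G A lt] := by
  classical
  tfae_have 1 → 2 := by
    intro h v hv w hw
    by_contra hc
    push_neg at hc
    obtain ⟨hp, hq⟩ := hc
    obtain ⟨p, hp1, hp2⟩ := Set.not_subset.mp hp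
    obtain ⟨q, hq1, hq2⟩ := Set.not_subset.mp hq
    obtain ⟨hpv, hpA⟩ := hp1
    obtain ⟨hqw, hqA⟩ := hq1
    apply h
    have hvw : v ≠ w := by rintro rfl; exact hp fun _ h => h
    have hpq : p ≠ q := by rintro rfl; exact hp2 ⟨hqw, hqA⟩
    refine ⟨![v, w], ![p, q], ?_, ?_, ?_, ?_, ?_, ?_⟩
    · intro i j hij
      fin_cases i <;> fin_cases j <;> first | rfl | (exact absurd hij (by simpa using hvw)) | (exact absurd hij (by simpa using hvw.symm))
    · intro i j hij
      fin_cases i <;> fin_cases j <;> first | rfl | (exact absurd hij (by simpa using hpq)) | (exact absurd hij (by simpa using hpq.symm))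
    · intro i; fin_cases i <;> simpa
    · intro i; fin_cases i <;> simp [hpA, hqA]
    · intro i; fin_cases i
      · exact hpv
      · exact hqw
    · intro i j hij
      fin_cases i <;> fin_cases j <;> simp_all
  tfae_have 2 → 3 := by
    intro h
    set S : V → Set V := fun v => G.neighborSet v \ A with hS
    refine ⟨fun a b => S a ⊂ S b ∨ (S a = S b ∧ WellOrderingRel a b), ?_, ?_, ?_, ?_⟩
    · rintro a _ b _ c _ (hab | ⟨hab, hab'⟩) (hbc | ⟨hbc, hbc'⟩)
      · exact Or.inl (hab.trans hbc)
      · exact Or.inl (hbc ▸ hab)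
      · exact Or.inl (hab ▸ hbc)
      · exact Or.inr ⟨hab.trans hbc, _root_.trans hab' hbc'⟩
    · rintro a _ (h1 | ⟨_, h2⟩)
      · exact h1.2 h1.1
      · exact _root_.irrefl_of WellOrderingRel a h2
    · intro a ha b hb hab
      rcases eq_or_ne (S a) (S b) with he | hne
      · rcases trichotomous_of WellOrderingRel a b with h1 | h1 | h1
        · exact Or.inl (Or.inr ⟨he, h1⟩)
        · exact absurd h1 hab
        · exact Or.inr (Or.inr ⟨he.symm, h1⟩)
      · rcases h a ha b hb with h1 | h1
        · exact Or.inl (Or.inl ⟨h1, fun h2 => hne (le_antisymm h1 h2)⟩)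
        · exact Or.inr (Or.inl ⟨h1, fun h2 => hne (le_antisymm h2 h1)⟩)
    · rintro a _ b _ (h1 | ⟨h1, _⟩)
      · exact h1.1
      · exact h1.le
  tfae_have 3 → 1 := by
    rintro ⟨lt, hc⟩ ⟨x, y, hxinj, hyinj, hxA, hyA, hadj, hind⟩
    have hne : x 0 ≠ x 1 := fun h => by simpa using hxinj h
    have key : ∀ i j : Fin 2, i ≠ j → lt (x i) (x j) → False := by
      intro i j hij hlt
      have := hc.chain _ (hxA i) _ (hxA j) hlt ⟨hadj i, hyA i⟩
      exact hind j i hij.symm this.1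
    rcases hc.total _ (hxA 0) _ (hxA 1) hne with h1 | h1
    · exact key 0 1 (by decide) h1
    · exact key 1 0 (by decide) h1
  tfae_finish
end

section
/- Let G be a simple graph whose girth is at least 7 (every cycle of G has length at least 7). Then for every subset A of the vertex set of G, the cut of the complement graph of G at A has no induced matching of size 3. (If such a matching x₁x₂, y₁y₂, z₁z₂ existed with x₁, y₁, z₁ ∈ A, then x₁y₂, y₂z₁, z₁x₂, x₂y₁, y₁z₂, z₂x₁ would all be edges of G, producing a cycle of length 6 in G, a contradiction.) -/
theorem stmt_3 {V : Type*} [Fintype V] (G : SimpleGraph V) (h : 7 ≤ G.egirth) (A : Set V) :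
    ¬ CutIM Gᶜ A 3 := by
  rintro ⟨x, y, hxinj, hyinj, hxA, hyA, hadj, hind⟩
  have hne : ∀ i j : Fin 3, x i ≠ y j := fun i j hij => hyA j (hij ▸ hxA i)
  have haj : ∀ i j : Fin 3, i ≠ j → G.Adj (x i) (y j) := by
    intro i j hij
    have := hind i j hij
    simp only [SimpleGraph.compl_adj, not_and, not_not] at this
    exact this (hne i j)
  have a01 : G.Adj (x 0) (y 1) := haj 0 1 (by decide)
  have a21 : G.Adj (x 2) (y 1) := haj 2 1 (by decide)
  have a20 : G.Adj (x 2) (y 0) := haj 2 0 (by decide)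
  have a10 : G.Adj (x 1) (y 0) := haj 1 0 (by decide)
  have a12 : G.Adj (x 1) (y 2) := haj 1 2 (by decide)
  have a02 : G.Adj (x 0) (y 2) := haj 0 2 (by decide)
  -- cycle x0 y1 x2 y0 x1 y2 x0
  let w : G.Walk (x 0) (x 0) :=
    .cons a01 (.cons a21.symm (.cons a20 (.cons a10.symm (.cons a12 (.cons a02.symm .nil)))))
  have hx01 : x 0 ≠ x 1 := fun e => absurd (hxinj e) (by decide)
  have hx02 : x 0 ≠ x 2 := fun e => absurd (hxinj e) (by decide)
  have hx12 : x 1 ≠ x 2 := fun e => absurd (hxinj e) (by decide)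
  have hy01 : y 0 ≠ y 1 := fun e => absurd (hyinj e) (by decide)
  have hy02 : y 0 ≠ y 2 := fun e => absurd (hyinj e) (by decide)
  have hy12 : y 1 ≠ y 2 := fun e => absurd (hyinj e) (by decide)
  have hcyc : w.IsCycle := by
    simp only [w, SimpleGraph.Walk.isCycle_def, SimpleGraph.Walk.isTrail_def,
      SimpleGraph.Walk.edges_cons, SimpleGraph.Walk.edges_nil,
      SimpleGraph.Walk.support_cons, SimpleGraph.Walk.support_nil,
      List.tail_cons, List.nodup_cons, List.mem_cons, List.not_mem_nil,
      List.nodup_nil, Sym2.eq, Sym2.rel_iff', Prod.mk.injEq, Prod.swap_prod_mk]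
    refine ⟨⟨?_, ?_⟩, ?_, ?_⟩ <;>
      simp_all [hne, (hne _ _).symm, Ne.symm, eq_comm]
  have := SimpleGraph.le_egirth.mp h _ w hcyc
  simp [w] at this
  norm_num at this
end

section
/- Let G be a finite simple graph that contains no induced subgraph isomorphic to 2K₂ (two disjoint edges with no other edges), no induced subgraph isomorphic to P₄ (the path on 4 vertices), and no induced subgraph isomorphic to C₄ (the cycle on 4 vertices); that is, G is a threshold graph. Then for every subset A of the vertex set of G, the cut of G at A has no induced matching of size 2. (Consequently, every linear branch decomposition of G, and of its complement, has mim-width at most 1.) -/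
/-- `G` contains an induced subgraph isomorphic to `H`. -/
def ContainsInduced {V W : Type*} (G : SimpleGraph V) (H : SimpleGraph W) : Prop :=
  ∃ U : Set V, Nonempty (G.induce U ≃g H)

/-- The graph `2K₂`: two disjoint edges on four vertices. -/
def twoK2 : SimpleGraph (Fin 4) :=
  SimpleGraph.fromEdgeSet {s(0, 1), s(2, 3)}

lemma contains_of_map {V W : Type*} (G : SimpleGraph V) (H : SimpleGraph W)
    (f : W → V) (hf : Function.Injective f)
    (h : ∀ i j, G.Adj (f i) (f j) ↔ H.Adj i j) : ContainsInduced G H := by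
  refine ⟨Set.range f, ⟨?_⟩⟩
  refine { toEquiv := (Equiv.ofInjective f hf).symm, map_rel_iff' := ?_ }
  rintro ⟨a, i, rfl⟩ ⟨b, j, rfl⟩
  simp only [Equiv.coe_fn_mk, Equiv.ofInjective_symm_apply, SimpleGraph.comap_adj,
    Function.Embedding.coe_subtype]
  exact (h i j).symm

theorem stmt_7 {V : Type*} [Fintype V] (G : SimpleGraph V)
    (h2K2 : ¬ ContainsInduced G twoK2)
    (hP4 : ¬ ContainsInduced G (SimpleGraph.pathGraph 4))
    (hC4 : ¬ ContainsInduced G (SimpleGraph.cycleGraph 4))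
    (A : Set V) :
    ¬ CutIM G A 2 := by
  rintro ⟨x, y, hxinj, hyinj, hxA, hyA, hadj, hind⟩
  have hne01 : (0 : Fin 2) ≠ 1 := by decide
  have hxx : x 0 ≠ x 1 := fun h => hne01 (hxinj h)
  have hxx' : x 1 ≠ x 0 := hxx.symm
  have hyy : y 0 ≠ y 1 := fun h => hne01 (hyinj h)
  have hyy' : y 1 ≠ y 0 := hyy.symm
  have hxy : ∀ i j, x i ≠ y j := fun i j h => hyA j (h ▸ hxA i)
  have hyx : ∀ i j, y i ≠ x j := fun i j => (hxy j i).symm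
  have h01 : G.Adj (x 0) (y 0) := hadj 0
  have h01' : G.Adj (y 0) (x 0) := h01.symm
  have h23 : G.Adj (x 1) (y 1) := hadj 1
  have h23' : G.Adj (y 1) (x 1) := h23.symm
  have hn1 : ¬ G.Adj (x 0) (y 1) := hind 0 1 hne01
  have hn1' : ¬ G.Adj (y 1) (x 0) := fun h => hn1 h.symm
  have hn2 : ¬ G.Adj (x 1) (y 0) := hind 1 0 hne01.symm
  have hn2' : ¬ G.Adj (y 0) (x 1) := fun h => hn2 h.symm
  by_cases hac : G.Adj (x 0) (x 1) <;> by_cases hbd : G.Adj (y 0) (y 1)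
  · -- C4 : x0 - y0 - y1 - x1 - x0
    have hac' := hac.symm; have hbd' := hbd.symm
    refine hC4 (contains_of_map G _ ![x 0, y 0, y 1, x 1] ?_ ?_)
    · intro i j hij
      fin_cases i <;> fin_cases j <;>
        simp_all [hxy 0 0, hxy 0 1, hxy 1 0, hxy 1 1, hyx 0 0, hyx 0 1, hyx 1 0, hyx 1 1]
    · intro i j
      fin_cases i <;> fin_cases j <;>
        simp [SimpleGraph.cycleGraph_adj, h01, h23, hn1, hn2, hac, hbd,
          h01', h23', hac', hbd', hn1', hn2', G.irrefl] <;> decide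
  · -- P4 : y0 - x0 - x1 - y1
    have hac' := hac.symm; have hbd' : ¬ G.Adj (y 1) (y 0) := fun h => hbd h.symm
    refine hP4 (contains_of_map G _ ![y 0, x 0, x 1, y 1] ?_ ?_)
    · intro i j hij
      fin_cases i <;> fin_cases j <;>
        simp_all [hxy 0 0, hxy 0 1, hxy 1 0, hxy 1 1, hyx 0 0, hyx 0 1, hyx 1 0, hyx 1 1]
    · intro i j
      fin_cases i <;> fin_cases j <;>
        simp [SimpleGraph.pathGraph_adj, h01, h23, hn1, hn2, hac, hbd,
          h01', h23', hac', hbd', hn1', hn2', G.irrefl] <;> decide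
  · -- P4 : x0 - y0 - y1 - x1
    have hac' : ¬ G.Adj (x 1) (x 0) := fun h => hac h.symm; have hbd' := hbd.symm
    refine hP4 (contains_of_map G _ ![x 0, y 0, y 1, x 1] ?_ ?_)
    · intro i j hij
      fin_cases i <;> fin_cases j <;>
        simp_all [hxy 0 0, hxy 0 1, hxy 1 0, hxy 1 1, hyx 0 0, hyx 0 1, hyx 1 0, hyx 1 1]
    · intro i j
      fin_cases i <;> fin_cases j <;>
        simp [SimpleGraph.pathGraph_adj, h01, h23, hn1, hn2, hac, hbd,
          h01', h23', hac', hbd', hn1', hn2', G.irrefl] <;> decide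
  · -- 2K2 : x0y0 , x1y1
    have hac' : ¬ G.Adj (x 1) (x 0) := fun h => hac h.symm
    have hbd' : ¬ G.Adj (y 1) (y 0) := fun h => hbd h.symm
    refine h2K2 (contains_of_map G _ ![x 0, y 0, x 1, y 1] ?_ ?_)
    · intro i j hij
      fin_cases i <;> fin_cases j <;>
        simp_all [hxy 0 0, hxy 0 1, hxy 1 0, hxy 1 1, hyx 0 0, hyx 0 1, hyx 1 0, hyx 1 1]
    · intro i j
      fin_cases i <;> fin_cases j <;>
        simp [twoK2, h01, h23, hn1, hn2, hac, hbd,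
          h01', h23', hac', hbd', hn1', hn2', G.irrefl]
end

section
/- Let G be a simple graph on a finite vertex set V and let A ⊆ V be such that the cut of G at A has no induced matching of size 2, and fix a chain order < on A. Let S and S′ be cluster sets of G contained in A that are <-equivalent, and let T be any subset of V ∖ A. Then S ∪ T is a cluster set of G if and only if S′ ∪ T is a cluster set of G. -/
/-- `v` and `w` lie in `S` and are joined by a path inside the induced subgraph `G[S]`. -/
def InducedReach {V : Type*} (G : SimpleGraph V) (S : Set V) (v w : V) : Prop :=
  ∃ (hv : v ∈ S) (hw : w ∈ S), (G.induce S).Reachable ⟨v, hv⟩ ⟨w, hw⟩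

/-- The connected component of `v` in the induced subgraph `G[S]`, as a subset of `S`. -/
def indComp {V : Type*} (G : SimpleGraph V) (S : Set V) (v : V) : Set V :=
  {w | InducedReach G S v w}

/-- `S` is a cluster set of `G`: every connected component of `G[S]` is a complete graph, i.e.
any two distinct vertices in the same component of `G[S]` are adjacent. -/
def IsClusterSet {V : Type*} (G : SimpleGraph V) (S : Set V) : Prop :=
  ∀ v w, InducedReach G S v w → v ≠ w → G.Adj v w

/-- `m` is the `lt`-maximum element of `S`. -/
def IsMaxOf {V : Type*} (lt : V → V → Prop) (S : Set V) (m : V) : Prop :=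
  m ∈ S ∧ ∀ x ∈ S, x ≠ m → lt x m

/-- `m` is the `lt`-minimum element of `S`. -/
def IsMinOf {V : Type*} (lt : V → V → Prop) (S : Set V) (m : V) : Prop :=
  m ∈ S ∧ ∀ x ∈ S, x ≠ m → lt m x

/-- `S` and `S'` are `lt`-equivalent (w.r.t. `G`): both are empty, or, listing the connected
components of `G[S]` (resp. `G[S']`) by strictly decreasing `lt`-maximum vertex, the first
components have the same maximum `m` (which is then the overall maximum) and the same minimum,
and either both lists stop there, or both have a second component and these have the same
maximum. -/
def RepEquiv {V : Type*} (G : SimpleGraph V) (lt : V → V → Prop) (S S' : Set V) : Prop :=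
  (S = ∅ ↔ S' = ∅) ∧
  (S.Nonempty → ∃ m, IsMaxOf lt S m ∧ IsMaxOf lt S' m ∧
    (∃ t, IsMinOf lt (indComp G S m) t ∧ IsMinOf lt (indComp G S' m) t) ∧
    ((S \ indComp G S m = ∅ ∧ S' \ indComp G S' m = ∅) ∨
      (∃ m₂, IsMaxOf lt (S \ indComp G S m) m₂ ∧ IsMaxOf lt (S' \ indComp G S' m) m₂)))

section Aux

variable {V : Type*} {G : SimpleGraph V} {S U : Set V}

lemma reach_refl {v : V} (hv : v ∈ S) : InducedReach G S v v :=
  ⟨hv, hv, SimpleGraph.Reachable.refl _⟩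

lemma reach_symm {v w : V} (h : InducedReach G S v w) : InducedReach G S w v := by
  obtain ⟨hv, hw, r⟩ := h
  exact ⟨hw, hv, r.symm⟩

lemma reach_trans {u v w : V} (h1 : InducedReach G S u v) (h2 : InducedReach G S v w) :
    InducedReach G S u w := by
  obtain ⟨hu, hv, r1⟩ := h1
  obtain ⟨hv', hw, r2⟩ := h2
  exact ⟨hu, hw, r1.trans r2⟩

lemma reach_of_adj {v w : V} (hv : v ∈ S) (hw : w ∈ S) (h : G.Adj v w) :
    InducedReach G S v w :=
  ⟨hv, hw, SimpleGraph.Adj.reachable (by exact h)⟩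

lemma reach_left {v w : V} (h : InducedReach G S v w) : v ∈ S := h.1

lemma reach_right {v w : V} (h : InducedReach G S v w) : w ∈ S := h.2.1

lemma reach_mono (hSU : S ⊆ U) {v w : V} (h : InducedReach G S v w) :
    InducedReach G U v w := by
  obtain ⟨hv, hw, r⟩ := h
  refine ⟨hSU hv, hSU hw, ?_⟩
  let f : G.induce S →g G.induce U :=
    ⟨fun x => ⟨x.1, hSU x.2⟩, fun {a b} hab => by exact hab⟩
  exact r.map f

lemma cluster_of_triangle
    (h3 : ∀ a b c : V, a ∈ U → b ∈ U → c ∈ U → G.Adj a b → G.Adj b c → a ≠ c → G.Adj a c) :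
    IsClusterSet G U := by
  have key : ∀ (x y : U) (_ : (G.induce U).Walk x y), (x : V) = y ∨ G.Adj x y := by
    intro x y p
    induction p with
    | nil => exact Or.inl rfl
    | @cons u v w h p ih =>
      have huv : G.Adj (u : V) v := h
      rcases ih with heq | hadj
      · exact Or.inr (heq ▸ huv)
      · by_cases hxy : (u : V) = w
        · exact Or.inl hxy
        · exact Or.inr (h3 u v w u.2 v.2 w.2 huv hadj hxy)
  intro v w hr hne
  obtain ⟨hv, hw, r⟩ := hr
  obtain ⟨p⟩ := r
  rcases key ⟨v, hv⟩ ⟨w, hw⟩ p with heq | hadj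
  · exact absurd heq hne
  · exact hadj

lemma repEquiv_symm {lt : V → V → Prop} {S S' : Set V} (h : RepEquiv G lt S S') :
    RepEquiv G lt S' S := by
  obtain ⟨h1, h2⟩ := h
  refine ⟨h1.symm, fun hne => ?_⟩
  have hSne : S.Nonempty := by
    rw [Set.nonempty_iff_ne_empty] at hne ⊢
    exact fun h => hne (h1.mp h)
  obtain ⟨m, hm, hm', ⟨t, ht, ht'⟩, hrest⟩ := h2 hSne
  exact ⟨m, hm', hm, ⟨t, ht', ht⟩,
    hrest.imp (fun h => ⟨h.2, h.1⟩) (fun ⟨m2, x, y⟩ => ⟨m2, y, x⟩)⟩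

lemma transfer {A : Set V} {lt : V → V → Prop} (hlt : ChainOrderOn G A lt)
    {S S' : Set V} (hS : S ⊆ A) (hS' : S' ⊆ A)
    (hcl' : IsClusterSet G S')
    (heq : RepEquiv G lt S S')
    {T : Set V} (hT : T ⊆ Aᶜ)
    (hST : IsClusterSet G (S ∪ T)) : IsClusterSet G (S' ∪ T) := by
  by_cases hS'e : S' = ∅
  · have hSe : S = ∅ := heq.1.mpr hS'e
    rw [hSe, Set.empty_union] at hST
    rw [hS'e, Set.empty_union]
    exact hST
  · have hSne : S.Nonempty := by
      rw [Set.nonempty_iff_ne_empty]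
      exact fun h => hS'e (heq.1.mp h)
    obtain ⟨m, hmS, hmS', ⟨t, htS, htS'⟩, hrest⟩ := heq.2 hSne
    have htSmem : t ∈ S := reach_right htS.1
    have htS'mem : t ∈ S' := reach_right htS'.1
    have hmA : m ∈ A := hS hmS.1
    have htA : t ∈ A := hS htSmem
    -- C1 : T-neighbors of m are neighbors of t
    have hC1 : ∀ y ∈ T, G.Adj m y → G.Adj t y := by
      intro y hy hmy
      have hr : InducedReach G (S ∪ T) t y :=
        reach_trans (reach_symm (reach_mono Set.subset_union_left htS.1))
          (reach_of_adj (Or.inl hmS.1) (Or.inr hy) hmy)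
      exact hST t y hr (fun h => (hT hy) (h ▸ htA))
    -- C2 : T-neighborhood of m is closed under T-adjacency
    have hC2 : ∀ y ∈ T, ∀ z ∈ T, G.Adj m y → G.Adj y z → G.Adj m z := by
      intro y hy z hz hmy hyz
      have hr : InducedReach G (S ∪ T) m z :=
        reach_trans (reach_of_adj (Or.inl hmS.1) (Or.inr hy) hmy)
          (reach_of_adj (Or.inr hy) (Or.inr hz) hyz)
      exact hST m z hr (fun h => (hT hz) (h ▸ hmA))
    -- C3 : T-neighbors of m are pairwise adjacent
    have hC3 : ∀ y ∈ T, ∀ z ∈ T, G.Adj m y → G.Adj m z → y ≠ z → G.Adj y z := by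
      intro y hy z hz hmy hmz hne
      have hr : InducedReach G (S ∪ T) y z :=
        reach_trans (reach_of_adj (Or.inr hy) (Or.inl hmS.1) hmy.symm)
          (reach_of_adj (Or.inl hmS.1) (Or.inr hz) hmz)
      exact hST y z hr hne
    -- any S'-vertex adjacent to a T-vertex lies in the m-component of G[S']
    have memComp : ∀ b ∈ S', ∀ y ∈ T, G.Adj b y → InducedReach G S' m b := by
      intro b hb y hy hby
      by_contra hnc
      rcases hrest with ⟨_, h2⟩ | ⟨m₂, hm2S, hm2S'⟩
      · have : b ∈ S' \ indComp G S' m := ⟨hb, hnc⟩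
        rw [h2] at this
        exact this
      · have hm2Smem : m₂ ∈ S := hm2S.1.1
        have hm2S'mem : m₂ ∈ S' := hm2S'.1.1
        have hbm2 : G.Adj m₂ y := by
          by_cases hbe : b = m₂
          · exact hbe ▸ hby
          · have hlt2 : lt b m₂ := hm2S'.2 b ⟨hb, hnc⟩ hbe
            exact (hlt.chain b (hS' hb) m₂ (hS' hm2S'mem) hlt2 ⟨hby, hT hy⟩).1
        have hm2ne : m₂ ≠ m := fun h => hm2S.1.2 (by rw [h]; exact reach_refl hmS.1)
        have hltm : lt m₂ m := hmS.2 m₂ hm2Smem hm2ne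
        have hmy : G.Adj m y := (hlt.chain m₂ (hS hm2Smem) m hmA hltm ⟨hbm2, hT hy⟩).1
        have hr : InducedReach G (S ∪ T) m m₂ :=
          reach_trans (reach_of_adj (Or.inl hmS.1) (Or.inr hy) hmy)
            (reach_of_adj (Or.inr hy) (Or.inl hm2Smem) hbm2.symm)
        have hadj : G.Adj m m₂ := hST m m₂ hr (Ne.symm hm2ne)
        exact hm2S.1.2 (reach_of_adj hmS.1 hm2Smem hadj)
    -- every vertex in the m-component of G[S'] is adjacent to all T-neighbors of m
    have keyAdj : ∀ a, InducedReach G S' m a → ∀ y ∈ T, G.Adj m y → G.Adj a y := by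
      intro a hra y hy hmy
      have hty : G.Adj t y := hC1 y hy hmy
      by_cases hat : a = t
      · exact hat ▸ hty
      · have hlt1 : lt t a := htS'.2 a hra hat
        exact (hlt.chain t htA a (hS' (reach_right hra)) hlt1 ⟨hty, hT hy⟩).1
    -- vertices in the m-component of G[S'] only have T-neighbors of m
    have compAdjM : ∀ a, InducedReach G S' m a → ∀ y ∈ T, G.Adj a y → G.Adj m y := by
      intro a hra y hy hay
      by_cases ham : a = m
      · exact ham ▸ hay
      · have hltam : lt a m := hmS'.2 a (reach_right hra) ham
        exact (hlt.chain a (hS' (reach_right hra)) m hmA hltam ⟨hay, hT hy⟩).1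
    apply cluster_of_triangle
    intro a b c ha hb hc hab hbc hac
    rcases ha with haS | haT <;> rcases hb with hbS | hbT <;> rcases hc with hcS | hcT
    · -- a,b,c ∈ S'
      exact hcl' a c (reach_trans (reach_of_adj haS hbS hab) (reach_of_adj hbS hcS hbc)) hac
    · -- a,b ∈ S', c ∈ T
      have hbm : InducedReach G S' m b := memComp b hbS c hcT hbc
      have ham : InducedReach G S' m a := reach_trans hbm (reach_of_adj hbS haS hab.symm)
      exact keyAdj a ham c hcT (compAdjM b hbm c hcT hbc)
    · -- a,c ∈ S', b ∈ T
      have ham : InducedReach G S' m a := memComp a haS b hbT hab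
      have hcm : InducedReach G S' m c := memComp c hcS b hbT hbc.symm
      exact hcl' a c (reach_trans (reach_symm ham) hcm) hac
    · -- a ∈ S', b,c ∈ T
      have ham : InducedReach G S' m a := memComp a haS b hbT hab
      have hmb : G.Adj m b := compAdjM a ham b hbT hab
      exact keyAdj a ham c hcT (hC2 b hbT c hcT hmb hbc)
    · -- a ∈ T, b,c ∈ S'
      have hbm : InducedReach G S' m b := memComp b hbS a haT hab.symm
      have hcm : InducedReach G S' m c := reach_trans hbm (reach_of_adj hbS hcS hbc)
      exact (keyAdj c hcm a haT (compAdjM b hbm a haT hab.symm)).symm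
    · -- a,c ∈ T, b ∈ S'
      have hbm : InducedReach G S' m b := memComp b hbS a haT hab.symm
      exact hC3 a haT c hcT (compAdjM b hbm a haT hab.symm) (compAdjM b hbm c hcT hbc) hac
    · -- a,b ∈ T, c ∈ S'
      have hcm : InducedReach G S' m c := memComp c hcS b hbT hbc.symm
      have hmb : G.Adj m b := compAdjM c hcm b hbT hbc.symm
      exact (keyAdj c hcm a haT (hC2 b hbT a haT hmb hab.symm)).symm
    · -- a,b,c ∈ T
      exact hST a c (reach_trans (reach_of_adj (Or.inr haT) (Or.inr hbT) hab)
        (reach_of_adj (Or.inr hbT) (Or.inr hcT) hbc)) hac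

end Aux

theorem stmt_9 {V : Type*} [Fintype V] (G : SimpleGraph V) (A : Set V)
    (hmim : ¬ CutIM G A 2) (lt : V → V → Prop) (hlt : ChainOrderOn G A lt)
    (S S' : Set V) (hS : S ⊆ A) (hS' : S' ⊆ A)
    (hcl : IsClusterSet G S) (hcl' : IsClusterSet G S')
    (heq : RepEquiv G lt S S')
    (T : Set V) (hT : T ⊆ Aᶜ) :
    IsClusterSet G (S ∪ T) ↔ IsClusterSet G (S' ∪ T) := by
  exact ⟨fun h => transfer hlt hS hS' hcl' heq hT h,
    fun h => transfer hlt hS' hS hcl (repEquiv_symm heq) hT h⟩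
end

section
/- Let G be a simple graph on a finite vertex set V and let A ⊆ V be such that the cut of G at A has no induced matching of size 2, and fix a chain order < on A. Let S, S′ ⊆ A satisfy: S = ∅ iff S′ = ∅; and, if both are nonempty, letting C₁, …, C_p and C₁′, …, C_q′ be the connected components of G[S] and G[S′] respectively, each list ordered by strictly decreasing <-maximum vertex, the <-maximum of C₁ equals the <-maximum of C₁′ and the <-maximum of C_p equals the <-maximum of C_q′. Then for every T ⊆ V ∖ A, the induced subgraph G[S ∪ T] is connected if and only if G[S′ ∪ T] is connected. -/
/-- `m` is the maximum vertex of the last component: `m` is the `lt`-maximum of its own connected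
component in `G[S]`, and every other component of `G[S]` contains a vertex above `m`. -/
def IsLastHead {V : Type*} (G : SimpleGraph V) (lt : V → V → Prop) (S : Set V) (m : V) : Prop :=
  IsMaxOf lt (indComp G S m) m ∧
    ∀ x ∈ S, x ∉ indComp G S m → ∃ y ∈ indComp G S x, lt m y

section helpers
variable {V : Type*} {G : SimpleGraph V} {S T U : Set V} {v w : V}

lemma ir_refl (hv : v ∈ S) : InducedReach G S v v := ⟨hv, hv, .rfl⟩

lemma ir_symm (h : InducedReach G S v w) : InducedReach G S w v := by
  obtain ⟨hv, hw, r⟩ := h; exact ⟨hw, hv, r.symm⟩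

lemma ir_trans {u : V} (h : InducedReach G S v w) (h' : InducedReach G S w u) :
    InducedReach G S v u := by
  obtain ⟨hv, hw, r⟩ := h; obtain ⟨hw', hu, r'⟩ := h'; exact ⟨hv, hu, r.trans r'⟩

lemma ir_left (h : InducedReach G S v w) : v ∈ S := h.1
lemma ir_right (h : InducedReach G S v w) : w ∈ S := h.2.1

lemma ir_adj (hv : v ∈ S) (hw : w ∈ S) (h : G.Adj v w) : InducedReach G S v w :=
  ⟨hv, hw, SimpleGraph.Adj.reachable (by exact h)⟩

lemma ir_lift (h : InducedReach G S v w) (hv : v ∈ S) (hw : w ∈ S) :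
    (G.induce S).Reachable ⟨v, hv⟩ ⟨w, hw⟩ := by
  obtain ⟨hv', hw', r⟩ := h; exact r

lemma ir_mono (hsub : S ⊆ T) (h : InducedReach G S v w) : InducedReach G T v w := by
  obtain ⟨hv, hw, r⟩ := h
  refine ⟨hsub hv, hsub hw, ?_⟩
  exact r.map ((⟨fun x => ⟨x.1, hsub x.2⟩, fun {a b} hab => hab⟩ : G.induce S →g G.induce T))

lemma closed_walk {C : Set V} (hcl : ∀ v ∈ C, ∀ w ∈ U, G.Adj v w → w ∈ C) :
    ∀ {a b : ↥U} (_ : (G.induce U).Walk a b), ↑a ∈ C → ↑b ∈ C := by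
  intro a b w
  induction w with
  | nil => exact id
  | @cons x y z h p ih => intro hx; exact ih (hcl _ hx _ y.2 h)

lemma exit_walk : ∀ {a b : ↥(S ∪ T)} (_ : (G.induce (S ∪ T)).Walk a b), ↑a ∈ T →
    ((↑b ∈ T ∧ InducedReach G T ↑a ↑b) ∨
      ∃ t', InducedReach G T ↑a t' ∧ ∃ s ∈ S, G.Adj s t') := by
  intro a b w
  induction w with
  | nil => intro ha; exact Or.inl ⟨ha, ir_refl ha⟩
  | @cons x y z h p ih =>
    intro hx
    rcases y.2 with hyS | hyT
    · exact Or.inr ⟨x, ir_refl hx, y, hyS, SimpleGraph.Adj.symm h⟩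
    · rcases ih hyT with ⟨hbT, hr⟩ | ⟨t', hr, s, hs, hadj⟩
      · exact Or.inl ⟨hbT, ir_trans (ir_adj hx hyT h) hr⟩
      · exact Or.inr ⟨t', ir_trans (ir_adj hx hyT h) hr, s, hs, hadj⟩

end helpers

section helpers2
variable {V : Type*} {G : SimpleGraph V}

lemma conn_iff {A : Set V} {lt : V → V → Prop}
    (hlt : ChainOrderOn G A lt) {S T : Set V} (hS : S ⊆ A) (hT : T ⊆ Aᶜ)
    {m₁ m₂ : V} (h1 : IsMaxOf lt S m₁) (h2 : IsLastHead G lt S m₂) :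
    (G.induce (S ∪ T)).Connected ↔
      ((T = ∅ ∧ m₂ = m₁) ∨
        ((∃ t ∈ T, G.Adj m₂ t) ∧ ∀ t ∈ T, ∃ t', InducedReach G T t t' ∧ G.Adj m₁ t')) := by
  have hdisj : ∀ x, x ∈ S → x ∉ T := fun x hx hxT => hT hxT (hS hx)
  have hm1S : m₁ ∈ S := h1.1
  have hm2r : InducedReach G S m₂ m₂ := h2.1.1
  have hm2S : m₂ ∈ S := ir_left hm2r
  have hasym : ∀ a ∈ A, ∀ b ∈ A, lt a b → ¬ lt b a :=
    fun a ha b hb hab hba => hlt.irrefl a ha (hlt.trans ha hb ha hab hba)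
  constructor
  · intro hc
    by_cases hT0 : T = ∅
    · left
      refine ⟨hT0, ?_⟩
      subst hT0
      rw [Set.union_empty] at hc
      have hr : (G.induce S).Reachable ⟨m₂, hm2S⟩ ⟨m₁, hm1S⟩ := hc.preconnected _ _
      have hir : InducedReach G S m₂ m₁ := ⟨hm2S, hm1S, hr⟩
      by_contra hne
      have h12 : lt m₁ m₂ := h2.1.2 m₁ hir (fun h => hne h.symm)
      have h21 : lt m₂ m₁ := h1.2 m₂ hm2S hne
      exact hasym m₁ (hS hm1S) m₂ (hS hm2S) h12 h21
    · right
      obtain ⟨t₀, ht₀⟩ := Set.nonempty_iff_ne_empty.mpr hT0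
      constructor
      · by_contra hno
        push_neg at hno
        have hcl : ∀ v ∈ indComp G S m₂, ∀ w ∈ S ∪ T, G.Adj v w → w ∈ indComp G S m₂ := by
          intro v hv w hw hadj
          have hvr : InducedReach G S m₂ v := hv
          have hvS : v ∈ S := ir_right hvr
          rcases hw with hwS | hwT
          · exact ir_trans hvr (ir_adj hvS hwS hadj)
          · exfalso
            have hwm₂ : G.Adj m₂ w := by
              by_cases hvm : v = m₂
              · exact hvm ▸ hadj
              · have hlt' : lt v m₂ := h2.1.2 v hv hvm
                exact (hlt.chain v (hS hvS) m₂ (hS hm2S) hlt' ⟨hadj, hT hwT⟩).1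
            exact hno w hwT hwm₂
        have hmem : (t₀ : V) ∈ indComp G S m₂ := by
          obtain ⟨p⟩ := hc.preconnected ⟨m₂, Or.inl hm2S⟩ ⟨t₀, Or.inr ht₀⟩
          exact closed_walk hcl p h2.1.1
        exact hdisj t₀ (ir_right (hmem : InducedReach G S m₂ t₀)) ht₀
      · intro t ht
        obtain ⟨p⟩ := hc.preconnected ⟨t, Or.inr ht⟩ ⟨m₁, Or.inl hm1S⟩
        rcases exit_walk p ht with ⟨hm1T, _⟩ | ⟨t', hr', s, hs, hadj⟩
        · exact absurd hm1T (hdisj m₁ hm1S)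
        · refine ⟨t', hr', ?_⟩
          by_cases hsm : s = m₁
          · exact hsm ▸ hadj
          · exact (hlt.chain s (hS hs) m₁ (hS hm1S) (h1.2 s hs hsm)
              ⟨hadj, hT (ir_right hr')⟩).1
  · rintro (⟨hT0, hm⟩ | ⟨⟨t₂, ht₂, hadj₂⟩, hcov⟩)
    · subst hT0
      rw [Set.union_empty]
      have h1' : IsMaxOf lt S m₂ := hm ▸ h1
      have hall : ∀ x ∈ S, InducedReach G S m₂ x := by
        intro x hx
        by_contra hxc
        obtain ⟨y, hy, hlty⟩ := h2.2 x hx hxc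
        have hyr : InducedReach G S x y := hy
        have hyS : y ∈ S := ir_right hyr
        by_cases hym : y = m₂
        · exact hlt.irrefl m₂ (hS hm2S) (hym ▸ hlty)
        · exact hasym y (hS hyS) m₂ (hS hm2S) (h1'.2 y hyS hym) hlty
      haveI : Nonempty ↥S := ⟨⟨m₂, hm2S⟩⟩
      refine SimpleGraph.Connected.mk fun a b => ?_
      exact ((ir_lift (hall a a.2) hm2S a.2).symm).trans (ir_lift (hall b b.2) hm2S b.2)
    · have keyS : ∀ x : ↥(S ∪ T), (x : V) ∈ S →
          (G.induce (S ∪ T)).Reachable ⟨t₂, Or.inr ht₂⟩ x := by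
        intro x hxS
        obtain ⟨y, hyr, hyge⟩ : ∃ y, InducedReach G S (x : V) y ∧ (y = m₂ ∨ lt m₂ y) := by
          by_cases hx : (x : V) ∈ indComp G S m₂
          · exact ⟨m₂, ir_symm (hx : InducedReach G S m₂ x), Or.inl rfl⟩
          · obtain ⟨y, hy, hlty⟩ := h2.2 x hxS hx
            exact ⟨y, hy, Or.inr hlty⟩
        have hyS : y ∈ S := ir_right hyr
        have hadjy : G.Adj y t₂ := by
          rcases hyge with rfl | hgt
          · exact hadj₂
          · exact (hlt.chain m₂ (hS hm2S) y (hS hyS) hgt ⟨hadj₂, hT ht₂⟩).1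
        have r1 : (G.induce (S ∪ T)).Reachable ⟨t₂, Or.inr ht₂⟩ ⟨y, Or.inl hyS⟩ :=
          SimpleGraph.Adj.reachable (by exact hadjy.symm)
        have r2 : (G.induce (S ∪ T)).Reachable ⟨y, Or.inl hyS⟩ x :=
          ir_lift (ir_mono Set.subset_union_left (ir_symm hyr)) (Or.inl hyS) x.2
        exact r1.trans r2
      have key : ∀ x : ↥(S ∪ T), (G.induce (S ∪ T)).Reachable ⟨t₂, Or.inr ht₂⟩ x := by
        intro x
        rcases x.2 with hxS | hxT
        · exact keyS x hxS
        · obtain ⟨t', hr', hadj'⟩ := hcov x hxT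
          have ht'T : t' ∈ T := ir_right hr'
          have r1 := keyS ⟨m₁, Or.inl hm1S⟩ hm1S
          have r2 : (G.induce (S ∪ T)).Reachable ⟨m₁, Or.inl hm1S⟩ ⟨t', Or.inr ht'T⟩ :=
            SimpleGraph.Adj.reachable (by exact hadj')
          have r3 : (G.induce (S ∪ T)).Reachable ⟨t', Or.inr ht'T⟩ x :=
            ir_lift (ir_mono Set.subset_union_right (ir_symm hr')) (Or.inr ht'T) x.2
          exact (r1.trans r2).trans r3
      haveI : Nonempty ↥(S ∪ T) := ⟨⟨t₂, Or.inr ht₂⟩⟩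
      exact SimpleGraph.Connected.mk fun a b => (key a).symm.trans (key b)

end helpers2

theorem stmt_11 {V : Type*} [Fintype V] (G : SimpleGraph V) (A : Set V)
    (hmim : ¬ CutIM G A 2) (lt : V → V → Prop) (hlt : ChainOrderOn G A lt)
    (S S' : Set V) (hS : S ⊆ A) (hS' : S' ⊆ A)
    (hempty : S = ∅ ↔ S' = ∅)
    (hheads : S.Nonempty → ∃ m₁, IsMaxOf lt S m₁ ∧ IsMaxOf lt S' m₁ ∧
      ∃ m₂, IsLastHead G lt S m₂ ∧ IsLastHead G lt S' m₂)
    (T : Set V) (hT : T ⊆ Aᶜ) :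
    (G.induce (S ∪ T)).Connected ↔ (G.induce (S' ∪ T)).Connected := by
  by_cases hSe : S = ∅
  · rw [hSe, hempty.mp hSe]
  · obtain ⟨m₁, h1S, h1S', m₂, h2S, h2S'⟩ := hheads (Set.nonempty_iff_ne_empty.mpr hSe)
    rw [conn_iff hlt hS hT h1S h2S, conn_iff hlt hS' hT h1S' h2S']
end

section
/- Let G be a simple graph on a finite vertex set V and let B ⊆ A ⊆ V. Let < be a linear order on A such that: (i) for all v, w ∈ A, v < w implies N(v) ∖ A ⊆ N(w) ∖ A; (ii) for all v, w ∈ B, v < w implies N(v) ∖ B ⊆ N(w) ∖ B; and (iii) for all v, w ∈ A ∖ B, v < w implies N(v) ∩ B ⊆ N(w) ∩ B. Let X ⊆ B and Y ⊆ A ∖ B be cluster sets of G such that X ∪ Y is also a cluster set of G. Then rep(X ∪ Y) = rep(rep(X) ∪ rep(Y)), where rep denotes the representative with respect to <. -/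
/-- The representative of `S` w.r.t. the order `lt`: the `lt`-maximum and `lt`-minimum of the
first component of `G[S]` (the one containing the overall maximum of `S`), together with the
`lt`-maximum of the second component if there is one; `rep ∅ = ∅`. -/
def rep {V : Type*} (G : SimpleGraph V) (lt : V → V → Prop) (S : Set V) : Set V :=
  {m | IsMaxOf lt S m} ∪
    {t | ∃ m, IsMaxOf lt S m ∧ IsMinOf lt (indComp G S m) t} ∪
    {h | ∃ m, IsMaxOf lt S m ∧ IsMaxOf lt (S \ indComp G S m) h}

/-- `lt` is a strict total order on the set `A`. -/
structure StrictTotalOn {V : Type*} (lt : V → V → Prop) (A : Set V) : Prop where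
  trans : ∀ ⦃a⦄, a ∈ A → ∀ ⦃b⦄, b ∈ A → ∀ ⦃c⦄, c ∈ A → lt a b → lt b c → lt a c
  irrefl : ∀ a ∈ A, ¬ lt a a
  total : ∀ a ∈ A, ∀ b ∈ A, a ≠ b → lt a b ∨ lt b a

/-!
Let `m` be the maximum of `X ∪ Y` and `C` its component, a clique. Conditions (ii) and (iii)
say that the neighbourhoods of `X` in `Y`, and of `Y` in `X`, grow along the order. Hence if `C`
meets `X` it contains the maximum of `X`, and `C ∩ X` is exactly the component of that maximum in
`G[X]`; so the maximum of `C`, the minimum of `C` and the maximum outside `C` are already vertices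
of `rep X` or `rep Y`. Finally, shrinking a cluster set to a subset that still contains its
representative does not change the representative: the first component only shrinks to its trace
on the subset.
-/

section RepOfUnion

variable {V : Type*}

namespace InducedReach

variable {G : SimpleGraph V} {S T : Set V} {u v w : V}

lemma symm (h : InducedReach G S u v) : InducedReach G S v u :=
  let ⟨hu, hv, r⟩ := h; ⟨hv, hu, r.symm⟩

lemma trans (h : InducedReach G S u v) (h' : InducedReach G S v w) : InducedReach G S u w :=
  let ⟨hu, _, r⟩ := h; let ⟨_, hw, r'⟩ := h'; ⟨hu, hw, r.trans r'⟩

lemma mono (hTS : T ⊆ S) (h : InducedReach G T u v) : InducedReach G S u v :=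
  let ⟨hu, hv, r⟩ := h
  ⟨hTS hu, hTS hv, r.map (⟨Set.inclusion hTS, id⟩ : G.induce T →g G.induce S)⟩

lemma of_adj (hu : u ∈ S) (hv : v ∈ S) (h : G.Adj u v) : InducedReach G S u v :=
  ⟨hu, hv, SimpleGraph.Adj.reachable (G := G.induce S) h⟩

end InducedReach

section indComp

variable {G : SimpleGraph V} {S T : Set V} {u v : V}

lemma indComp_subset : indComp G S v ⊆ S := fun _ h => h.2.1

lemma mem_indComp_self (hv : v ∈ S) : v ∈ indComp G S v := ⟨hv, hv, .refl _⟩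

lemma indComp_mono (hTS : T ⊆ S) : indComp G T v ⊆ indComp G S v := fun _ => .mono hTS

lemma indComp_eq_of_mem (hu : u ∈ indComp G S v) : indComp G S u = indComp G S v :=
  Set.ext fun _ => ⟨hu.trans, hu.symm.trans⟩

/-- In a cluster set every component is a clique, so it stays connected inside any subset. -/
lemma IsClusterSet.indComp_eq_inter (hS : IsClusterSet G S) (hTS : T ⊆ S) (hv : v ∈ T) :
    indComp G T v = indComp G S v ∩ T := by
  refine Set.Subset.antisymm (Set.subset_inter (indComp_mono hTS) indComp_subset) ?_
  rintro u ⟨hu, huT⟩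
  rcases eq_or_ne v u with rfl | hne
  · exact mem_indComp_self hv
  · exact .of_adj hv huT (hS v u hu hne)

end indComp

section MaxMin

variable {lt : V → V → Prop} {A S T : Set V} {m : V}

lemma IsMaxOf.mono (h : IsMaxOf lt S m) (hm : m ∈ T) (hTS : T ⊆ S) : IsMaxOf lt T m :=
  ⟨hm, fun x hx => h.2 x (hTS hx)⟩

lemma IsMinOf.mono (h : IsMinOf lt S m) (hm : m ∈ T) (hTS : T ⊆ S) : IsMinOf lt T m :=
  IsMaxOf.mono (lt := fun a b => lt b a) h hm hTS

namespace StrictTotalOn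

lemma flip (hto : StrictTotalOn lt A) : StrictTotalOn (fun a b => lt b a) A :=
  ⟨fun _ ha _ hb _ hc h h' => hto.trans hc hb ha h' h, hto.irrefl,
    fun a ha b hb hne => (hto.total a ha b hb hne).symm⟩

lemma isMaxOf_unique (hto : StrictTotalOn lt A) (hSA : S ⊆ A) {m' : V}
    (h : IsMaxOf lt S m) (h' : IsMaxOf lt S m') : m = m' := by
  by_contra hne
  have hmA := hSA h.1
  exact hto.irrefl m hmA
    (hto.trans hmA (hSA h'.1) hmA (h'.2 m h.1 hne) (h.2 m' h'.1 (Ne.symm hne)))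

lemma exists_isMaxOf (hto : StrictTotalOn lt A) (hSA : S ⊆ A) (hS : S.Finite)
    (hne : S.Nonempty) : ∃ m, IsMaxOf lt S m := by
  induction S, hS using Set.Finite.induction_on with
  | empty => exact absurd hne Set.not_nonempty_empty
  | @insert a s _ _ ih =>
    have hsA : s ⊆ A := (Set.subset_insert a s).trans hSA
    rcases s.eq_empty_or_nonempty with rfl | hs
    · exact ⟨a, by simp [IsMaxOf]⟩
    obtain ⟨m, hm⟩ := ih hsA hs
    by_cases ham : a = m ∨ lt a m
    · refine ⟨m, Set.mem_insert_of_mem a hm.1, ?_⟩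
      rintro x (rfl | hx) hxm
      · exact ham.resolve_left hxm
      · exact hm.2 x hx hxm
    · obtain ⟨hne, hnlt⟩ := not_or.1 ham
      have hma : lt m a := (hto.total a (hSA (s.mem_insert a)) m (hsA hm.1) hne).resolve_left hnlt
      refine ⟨a, s.mem_insert a, ?_⟩
      rintro x (rfl | hx) hxa
      · exact absurd rfl hxa
      · rcases eq_or_ne x m with rfl | hxm
        · exact hma
        · exact hto.trans (hsA hx) (hsA hm.1) (hSA (s.mem_insert a)) (hm.2 x hx hxm) hma

lemma isMaxOf_inter_iff (hto : StrictTotalOn lt A) (hSA : S ⊆ A) (hS : S.Finite)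
    (hT : ∀ m, IsMaxOf lt S m → m ∈ T) : IsMaxOf lt (S ∩ T) m ↔ IsMaxOf lt S m := by
  rcases S.eq_empty_or_nonempty with rfl | hne
  · simp [IsMaxOf]
  obtain ⟨m₀, hm₀⟩ := hto.exists_isMaxOf hSA hS hne
  have hm₀' : IsMaxOf lt (S ∩ T) m₀ := hm₀.mono ⟨hm₀.1, hT m₀ hm₀⟩ Set.inter_subset_left
  constructor
  · intro h
    rwa [hto.isMaxOf_unique (Set.inter_subset_left.trans hSA) h hm₀']
  · intro h
    rwa [hto.isMaxOf_unique hSA h hm₀]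

lemma isMinOf_inter_iff (hto : StrictTotalOn lt A) (hSA : S ⊆ A) (hS : S.Finite)
    (hT : ∀ m, IsMinOf lt S m → m ∈ T) : IsMinOf lt (S ∩ T) m ↔ IsMinOf lt S m :=
  hto.flip.isMaxOf_inter_iff hSA hS hT

end StrictTotalOn

end MaxMin

section rep

variable {G : SimpleGraph V} {lt : V → V → Prop} {A S T X Y : Set V} {m mX z : V}

lemma rep_subset : rep G lt S ⊆ S := by
  rintro z ((h | ⟨m, -, ht⟩) | ⟨m, -, hh⟩)
  · exact h.1
  · exact indComp_subset ht.1
  · exact hh.1.1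

lemma rep_eq_of_rep_subset (hto : StrictTotalOn lt A) (hSA : S ⊆ A) (hS : S.Finite)
    (hSc : IsClusterSet G S) (hTS : T ⊆ S) (hrep : rep G lt S ⊆ T) :
    rep G lt T = rep G lt S := by
  have hT : T = S ∩ T := (Set.inter_eq_right.2 hTS).symm
  have hmax : ∀ m, IsMaxOf lt T m ↔ IsMaxOf lt S m := fun m => by
    rw [hT]; exact hto.isMaxOf_inter_iff hSA hS fun m hm => hrep (Or.inl (Or.inl hm))
  have hcomp : ∀ m, IsMaxOf lt S m → indComp G T m = indComp G S m ∩ T := fun m hm =>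
    hSc.indComp_eq_inter hTS ((hmax m).2 hm).1
  have hmin : ∀ m, IsMaxOf lt S m → ∀ t,
      IsMinOf lt (indComp G T m) t ↔ IsMinOf lt (indComp G S m) t := fun m hm t => by
    rw [hcomp m hm]
    exact hto.isMinOf_inter_iff (indComp_subset.trans hSA) (hS.subset indComp_subset)
      fun t ht => hrep (Or.inl (Or.inr ⟨m, hm, ht⟩))
  have hsnd : ∀ m, IsMaxOf lt S m → ∀ h,
      IsMaxOf lt (T \ indComp G T m) h ↔ IsMaxOf lt (S \ indComp G S m) h := fun m hm h => by
    have hdiff : T \ indComp G S m = (S \ indComp G S m) ∩ T :=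
      Set.ext fun x => ⟨fun ⟨hx, hxC⟩ => ⟨⟨hTS hx, hxC⟩, hx⟩, fun ⟨⟨_, hxC⟩, hx⟩ => ⟨hx, hxC⟩⟩
    rw [hcomp m hm, Set.sdiff_inter_self_eq_sdiff, hdiff]
    exact hto.isMaxOf_inter_iff (Set.sdiff_subset.trans hSA) (hS.subset Set.sdiff_subset)
      fun h hh => hrep (Or.inr ⟨m, hm, hh⟩)
  ext z
  simp only [rep, Set.mem_union, Set.mem_ofPred_eq]
  refine or_congr (or_congr (hmax z) ?_) ?_
  · exact ⟨fun ⟨m, hm, ht⟩ => ⟨m, (hmax m).1 hm, (hmin m ((hmax m).1 hm) z).1 ht⟩,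
      fun ⟨m, hm, ht⟩ => ⟨m, (hmax m).2 hm, (hmin m hm z).2 ht⟩⟩
  · exact ⟨fun ⟨m, hm, hh⟩ => ⟨m, (hmax m).1 hm, (hsnd m ((hmax m).1 hm) z).1 hh⟩,
      fun ⟨m, hm, hh⟩ => ⟨m, (hmax m).2 hm, (hsnd m hm z).2 hh⟩⟩

/-- Either `m ∈ X`, or `m ∈ Y` and the nested neighbourhoods of `X` in `Y` pass the edge from `z`
to `m` on to the maximum of `X`. -/
lemma isMaxOf_mem_indComp_union (hto : StrictTotalOn lt A) (hXA : X ⊆ A)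
    (hcross : ∀ x ∈ X, ∀ x' ∈ X, lt x x' → ∀ y ∈ Y, G.Adj x y → G.Adj x' y)
    (hSc : IsClusterSet G (X ∪ Y)) (hm : IsMaxOf lt (X ∪ Y) m) (hmX : IsMaxOf lt X mX)
    (hz : z ∈ X) (hzC : z ∈ indComp G (X ∪ Y) m) : mX ∈ indComp G (X ∪ Y) m := by
  by_cases hmX' : m ∈ X
  · rw [hto.isMaxOf_unique hXA hmX (hm.mono hmX' Set.subset_union_left)]
    exact mem_indComp_self hm.1
  rcases eq_or_ne z mX with rfl | hzmX
  · exact hzC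
  have hmY : m ∈ Y := hm.1.resolve_left hmX'
  have hadj : G.Adj m z := hSc m z hzC fun h => hmX' (h ▸ hz)
  exact .of_adj hm.1 (Or.inl hmX.1) (hcross z hz mX hmX.1 (hmX.2 z hz hzmX) m hmY hadj.symm).symm

lemma mem_rep_left_of_mem_rep_union (hto : StrictTotalOn lt A) (hXA : X ⊆ A) (hX : X.Finite)
    (hcross : ∀ x ∈ X, ∀ x' ∈ X, lt x x' → ∀ y ∈ Y, G.Adj x y → G.Adj x' y)
    (hSc : IsClusterSet G (X ∪ Y)) (hz : z ∈ rep G lt (X ∪ Y)) (hzX : z ∈ X) :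
    z ∈ rep G lt X := by
  obtain ⟨mX, hmX⟩ := hto.exists_isMaxOf hXA hX ⟨z, hzX⟩
  have hcomp : ∀ m, mX ∈ indComp G (X ∪ Y) m → indComp G X mX = indComp G (X ∪ Y) m ∩ X :=
    fun m h => by rw [hSc.indComp_eq_inter Set.subset_union_left hmX.1, indComp_eq_of_mem h]
  rcases hz with (hmax | ⟨m, hm, ht⟩) | ⟨m, hm, hh⟩
  · exact Or.inl (Or.inl (hmax.mono hzX Set.subset_union_left))
  · refine Or.inl (Or.inr ⟨mX, hmX, ?_⟩)
    rw [hcomp m (isMaxOf_mem_indComp_union hto hXA hcross hSc hm hmX hzX ht.1)]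
    exact ht.mono ⟨ht.1, hzX⟩ Set.inter_subset_left
  · by_cases hmXC : mX ∈ indComp G (X ∪ Y) m
    · refine Or.inr ⟨mX, hmX, hh.mono ?_ ?_⟩
      · rw [hcomp m hmXC]
        exact ⟨hzX, fun h => hh.1.2 h.1⟩
      · rw [hcomp m hmXC]
        exact fun x ⟨hx, hxC⟩ => ⟨Or.inl hx, fun h => hxC ⟨h, hx⟩⟩
    · refine Or.inl (Or.inl (hh.mono hzX fun x hx => ⟨Or.inl hx, fun hxC => hmXC ?_⟩))
      exact isMaxOf_mem_indComp_union hto hXA hcross hSc hm hmX hx hxC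

lemma rep_union_subset (hto : StrictTotalOn lt A) (hXA : X ⊆ A) (hYA : Y ⊆ A)
    (hX : X.Finite) (hY : Y.Finite)
    (hXY : ∀ x ∈ X, ∀ x' ∈ X, lt x x' → ∀ y ∈ Y, G.Adj x y → G.Adj x' y)
    (hYX : ∀ y ∈ Y, ∀ y' ∈ Y, lt y y' → ∀ x ∈ X, G.Adj y x → G.Adj y' x)
    (hSc : IsClusterSet G (X ∪ Y)) : rep G lt (X ∪ Y) ⊆ rep G lt X ∪ rep G lt Y := by
  intro z hz
  rcases rep_subset hz with hzX | hzY
  · exact Or.inl (mem_rep_left_of_mem_rep_union hto hXA hX hXY hSc hz hzX)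
  · rw [Set.union_comm] at hz hSc
    exact Or.inr (mem_rep_left_of_mem_rep_union hto hYA hY hYX hSc hz hzY)

end rep

end RepOfUnion

theorem stmt_12_general {V : Type*} [Fintype V] (G : SimpleGraph V) (A B : Set V) (hBA : B ⊆ A)
    (lt : V → V → Prop) (hto : StrictTotalOn lt A)
    (h2 : ∀ v ∈ B, ∀ w ∈ B, lt v w → G.neighborSet v \ B ⊆ G.neighborSet w \ B)
    (h3 : ∀ v ∈ A \ B, ∀ w ∈ A \ B, lt v w → G.neighborSet v ∩ B ⊆ G.neighborSet w ∩ B)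
    (X Y : Set V) (hX : X ⊆ B) (hY : Y ⊆ A \ B)
    (hXYc : IsClusterSet G (X ∪ Y)) :
    rep G lt (X ∪ Y) = rep G lt (rep G lt X ∪ rep G lt Y) := by
  have hXA : X ⊆ A := hX.trans hBA
  have hYA : Y ⊆ A := hY.trans Set.sdiff_subset
  have hXY : ∀ x ∈ X, ∀ x' ∈ X, lt x x' → ∀ y ∈ Y, G.Adj x y → G.Adj x' y :=
    fun x hx x' hx' hlt y hy hadj => (h2 x (hX hx) x' (hX hx') hlt ⟨hadj, (hY hy).2⟩).1
  have hYX : ∀ y ∈ Y, ∀ y' ∈ Y, lt y y' → ∀ x ∈ X, G.Adj y x → G.Adj y' x :=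
    fun y hy y' hy' hlt x hx hadj => (h3 y (hY hy) y' (hY hy') hlt ⟨hadj, hX hx⟩).1
  refine (rep_eq_of_rep_subset hto (Set.union_subset hXA hYA) (Set.toFinite _) hXYc
    (Set.union_subset_union rep_subset rep_subset) ?_).symm
  exact rep_union_subset hto hXA hYA (Set.toFinite X) (Set.toFinite Y) hXY hYX hXYc

theorem stmt_12 {V : Type*} [Fintype V] (G : SimpleGraph V) (A B : Set V) (hBA : B ⊆ A)
    (lt : V → V → Prop) (hto : StrictTotalOn lt A)
    (h1 : ∀ v ∈ A, ∀ w ∈ A, lt v w → G.neighborSet v \ A ⊆ G.neighborSet w \ A)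
    (h2 : ∀ v ∈ B, ∀ w ∈ B, lt v w → G.neighborSet v \ B ⊆ G.neighborSet w \ B)
    (h3 : ∀ v ∈ A \ B, ∀ w ∈ A \ B, lt v w → G.neighborSet v ∩ B ⊆ G.neighborSet w ∩ B)
    (X Y : Set V) (hX : X ⊆ B) (hY : Y ⊆ A \ B)
    (hXc : IsClusterSet G X) (hYc : IsClusterSet G Y) (hXYc : IsClusterSet G (X ∪ Y)) :
    rep G lt (X ∪ Y) = rep G lt (rep G lt X ∪ rep G lt Y) :=
  stmt_12_general G A B hBA lt hto h2 h3 X Y hX hY hXYc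
end

section
/- Let G be a simple graph on a finite vertex set V and let A and B be disjoint subsets of V such that the cut of G at A ∪ B has no induced matching of size 2. Suppose <_A is a chain order on A (for all v, w ∈ A, v <_A w implies N(v) ∖ A ⊆ N(w) ∖ A) and <_B is a chain order on B (for all v, w ∈ B, v <_B w implies N(v) ∖ B ⊆ N(w) ∖ B). Then there exists a chain order < on A ∪ B (for all v, w ∈ A ∪ B, v < w implies N(v) ∖ (A ∪ B) ⊆ N(w) ∖ (A ∪ B)) whose restriction to A coincides with <_A and whose restriction to B coincides with <_B. (This is the inductive step in constructing consistent lower chain orders along a rooted layout of mim-width 1.) -/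
theorem stmt_13 {V : Type*} [Fintype V] (G : SimpleGraph V) (A B : Set V)
    (hdisj : Disjoint A B) (hmim : ¬ CutIM G (A ∪ B) 2)
    (ltA ltB : V → V → Prop)
    (hA : ChainOrderOn G A ltA) (hB : ChainOrderOn G B ltB) :
    ∃ lt : V → V → Prop, ChainOrderOn G (A ∪ B) lt ∧
      (∀ v ∈ A, ∀ w ∈ A, (lt v w ↔ ltA v w)) ∧
      (∀ v ∈ B, ∀ w ∈ B, (lt v w ↔ ltB v w)) := by
  classical
  set N : V → Set V := fun v => G.neighborSet v \ (A ∪ B) with hNdef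
  have hd : ∀ {v : V}, v ∈ A → v ∈ B → False := fun hvA hvB =>
    Set.disjoint_left.mp hdisj hvA hvB
  have hAc : ∀ ⦃a⦄, a ∈ A → ∀ ⦃a'⦄, a' ∈ A → ltA a a' → N a ⊆ N a' := by
    intro a ha a' ha' h x hx
    have hx' : x ∈ G.neighborSet a \ A := ⟨hx.1, fun h' => hx.2 (Or.inl h')⟩
    have h2 := hA.chain a ha a' ha' h hx'
    exact ⟨h2.1, fun h' => h'.elim (fun h'' => h2.2 h'') (fun h'' => hx.2 (Or.inr h''))⟩
  have hBc : ∀ ⦃b⦄, b ∈ B → ∀ ⦃b'⦄, b' ∈ B → ltB b b' → N b ⊆ N b' := by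
    intro b hb b' hb' h x hx
    have hx' : x ∈ G.neighborSet b \ B := ⟨hx.1, fun h' => hx.2 (Or.inr h')⟩
    have h2 := hB.chain b hb b' hb' h hx'
    exact ⟨h2.1, fun h' => h'.elim (fun h'' => hx.2 (Or.inl h'')) (fun h'' => h2.2 h'')⟩
  have key : ∀ ⦃a⦄, a ∈ A → ∀ ⦃b⦄, b ∈ B → ¬ N a ⊆ N b → N b ⊆ N a := by
    intro a ha b hb hns y' hy'
    by_contra hy'a
    obtain ⟨y, hyA, hyB⟩ := Set.not_subset.mp hns
    apply hmim
    have hab : a ≠ b := fun h => hd ha (h ▸ hb)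
    have hyy : y ≠ y' := fun h => hy'a (h ▸ hyA)
    refine ⟨![a, b], ![y, y'], ?_, ?_, ?_, ?_, ?_, ?_⟩
    · intro i j hij
      fin_cases i <;> fin_cases j <;> simp_all
    · intro i j hij
      fin_cases i <;> fin_cases j <;> simp_all
    · intro i
      fin_cases i
      · exact Or.inl ha
      · exact Or.inr hb
    · intro i
      fin_cases i
      · exact hyA.2
      · exact hy'.2
    · intro i
      fin_cases i
      · exact hyA.1
      · exact hy'.1
    · intro i j hij hadj
      fin_cases i <;> fin_cases j
      · exact hij rfl
      · exact hy'a ⟨hadj, hy'.2⟩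
      · exact hyB ⟨hadj, hyA.2⟩
      · exact hij rfl
  refine ⟨fun v w => (v ∈ A ∧ w ∈ A ∧ ltA v w) ∨ (v ∈ B ∧ w ∈ B ∧ ltB v w) ∨
      (v ∈ A ∧ w ∈ B ∧ N v ⊆ N w) ∨ (v ∈ B ∧ w ∈ A ∧ N v ⊆ N w ∧ ¬ N w ⊆ N v),
    ⟨?_, ?_, ?_, ?_⟩, ?_, ?_⟩
  · -- trans
    rintro a ha b hb c hc
      (⟨haA, hbA, h1⟩ | ⟨haB, hbB, h1⟩ | ⟨haA, hbB, h1⟩ | ⟨haB, hbA, h1, h1'⟩)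
      (⟨hbA', hcA, h2⟩ | ⟨hbB', hcB, h2⟩ | ⟨hbA', hcB, h2⟩ | ⟨hbB', hcA, h2, h2'⟩)
    -- AA then AA
    · exact Or.inl ⟨haA, hcA, hA.trans haA hbA hcA h1 h2⟩
    -- AA then BB
    · exact absurd hbB' (fun h => hd hbA h)
    -- AA then AB
    · exact Or.inr (Or.inr (Or.inl ⟨haA, hcB, (hAc haA hbA h1).trans h2⟩))
    -- AA then BA
    · exact absurd hbB' (fun h => hd hbA h)
    -- BB then AA
    · exact absurd hbA' (fun h => hd h hbB)
    -- BB then BB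
    · exact Or.inr (Or.inl ⟨haB, hcB, hB.trans haB hbB hcB h1 h2⟩)
    -- BB then AB
    · exact absurd hbA' (fun h => hd h hbB)
    -- BB then BA
    · refine Or.inr (Or.inr (Or.inr ⟨haB, hcA, (hBc haB hbB h1).trans h2, fun hca => ?_⟩))
      exact h2' (hca.trans (hBc haB hbB h1))
    -- AB then AA
    · exact absurd hbA' (fun h => hd h hbB)
    -- AB then BB
    · exact Or.inr (Or.inr (Or.inl ⟨haA, hcB, h1.trans (hBc hbB hcB h2)⟩))
    -- AB then AB
    · exact absurd hbA' (fun h => hd h hbB)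
    -- AB then BA
    · refine Or.inl ⟨haA, hcA, ?_⟩
      rcases eq_or_ne a c with rfl | hac
      · exact absurd h1 h2'
      · rcases hA.total a haA c hcA hac with h | h
        · exact h
        · exact absurd ((hAc hcA haA h).trans h1) h2'
    -- BA then AA
    · refine Or.inr (Or.inr (Or.inr ⟨haB, hcA, h1.trans (hAc hbA hcA h2), fun hca => ?_⟩))
      exact h1' ((hAc hbA hcA h2).trans hca)
    -- BA then BB
    · exact absurd hbA (fun h => hd h hbB')
    -- BA then AB
    · refine Or.inr (Or.inl ⟨haB, hcB, ?_⟩)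
      rcases eq_or_ne a c with rfl | hac
      · exact absurd h2 h1'
      · rcases hB.total a haB c hcB hac with h | h
        · exact h
        · exact absurd (h2.trans (hBc hcB haB h)) h1'
    -- BA then BA
    · exact absurd hbA (fun h => hd h hbB')
  · -- irrefl
    rintro a ha (⟨h1, _, h⟩ | ⟨h1, _, h⟩ | ⟨h1, h2, _⟩ | ⟨h1, h2, _⟩)
    · exact hA.irrefl a h1 h
    · exact hB.irrefl a h1 h
    · exact hd h1 h2
    · exact hd h2 h1
  · -- total
    rintro a ha b hb hab
    rcases ha with haA | haB <;> rcases hb with hbA | hbB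
    · rcases hA.total a haA b hbA hab with h | h
      · exact Or.inl (Or.inl ⟨haA, hbA, h⟩)
      · exact Or.inr (Or.inl ⟨hbA, haA, h⟩)
    · by_cases hsub : N a ⊆ N b
      · exact Or.inl (Or.inr (Or.inr (Or.inl ⟨haA, hbB, hsub⟩)))
      · exact Or.inr (Or.inr (Or.inr (Or.inr ⟨hbB, haA, key haA hbB hsub, hsub⟩)))
    · by_cases hsub : N b ⊆ N a
      · exact Or.inr (Or.inr (Or.inr (Or.inl ⟨hbA, haB, hsub⟩)))
      · exact Or.inl (Or.inr (Or.inr (Or.inr ⟨haB, hbA, key hbA haB hsub, hsub⟩)))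
    · rcases hB.total a haB b hbB hab with h | h
      · exact Or.inl (Or.inr (Or.inl ⟨haB, hbB, h⟩))
      · exact Or.inr (Or.inr (Or.inl ⟨hbB, haB, h⟩))
  · -- chain
    rintro a ha b hb (⟨haA, hbA, h⟩ | ⟨haB, hbB, h⟩ | ⟨_, _, h⟩ | ⟨_, _, h, _⟩)
    · exact hAc haA hbA h
    · exact hBc haB hbB h
    · exact h
    · exact h
  · -- restriction to A
    intro v hv w hw
    constructor
    · rintro (⟨_, _, h⟩ | ⟨h1, _, _⟩ | ⟨_, h2, _⟩ | ⟨h1, _, _⟩)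
      · exact h
      · exact absurd h1 (fun h => hd hv h)
      · exact absurd h2 (fun h => hd hw h)
      · exact absurd h1 (fun h => hd hv h)
    · exact fun h => Or.inl ⟨hv, hw, h⟩
  · -- restriction to B
    intro v hv w hw
    constructor
    · rintro (⟨h1, _, _⟩ | ⟨_, _, h⟩ | ⟨h1, _, _⟩ | ⟨_, h2, _⟩)
      · exact absurd h1 (fun h => hd h hv)
      · exact h
      · exact absurd h1 (fun h => hd h hv)
      · exact absurd h2 (fun h => hd h hw)
    · exact fun h => Or.inr (Or.inl ⟨hv, hw, h⟩)
end

section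
/- Let F be the simple graph with vertex set {v₁, v₂, v₃, v₄, v₅, v₆} and edge set {v₁v₂, v₁v₃, v₁v₄, v₁v₅, v₁v₆, v₂v₃, v₂v₄, v₅v₆}. Then F is a polar graph, but the disjoint union of two vertex-disjoint copies of F is not a polar graph. -/
/-- `G` is a polar graph: its vertex set can be partitioned into a cluster set `S` and a
co-cluster set `Sᶜ` (a cluster set of the complement graph). -/
def IsPolar {V : Type*} (G : SimpleGraph V) : Prop :=
  ∃ S : Set V, IsClusterSet G S ∧ IsClusterSet Gᶜ Sᶜ

/-- The disjoint union of `ℓ` copies of the graph `F`. -/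
def copies {W : Type*} (F : SimpleGraph W) (ℓ : ℕ) : SimpleGraph (Fin ℓ × W) where
  Adj p q := p.1 = q.1 ∧ F.Adj p.2 q.2
  symm := ⟨fun _ _ h => ⟨h.1.symm, h.2.symm⟩⟩
  loopless := ⟨fun p h => F.irrefl h.2⟩

/-- The graph `F` on six vertices `v₁, …, v₆` (here `0, …, 5`) with edge set
`{v₁v₂, v₁v₃, v₁v₄, v₁v₅, v₁v₆, v₂v₃, v₂v₄, v₅v₆}`. -/
def Fgraph : SimpleGraph (Fin 6) :=
  SimpleGraph.fromEdgeSet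
    {s(0, 1), s(0, 2), s(0, 3), s(0, 4), s(0, 5), s(1, 2), s(1, 3), s(4, 5)}

/-!
`F` splits into the triangle `{v₁, v₅, v₆}` and the set `{v₂, v₃, v₄}`, which induces a single
edge `v₃v₄` in the complement.

In the complement of a disjoint union, every vertex of one copy is adjacent to every vertex of
the other. So if the co-cluster part meets the second copy, any two of its vertices in the first
copy have a common neighbour in the complement, hence are adjacent there: the co-cluster part is
independent inside the first copy. If it misses the second copy, that copy lies in the cluster
part. Either way some copy of `F` splits into a cluster set and an independent set, and `F`
admits no such splitting.
-/

open SimpleGraph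

variable {V W : Type*}

theorem isClusterSet_iff {G : SimpleGraph V} {S : Set V} :
    IsClusterSet G S ↔ ∀ ⦃u v w⦄, u ∈ S → v ∈ S → w ∈ S →
      G.Adj u v → G.Adj v w → u ≠ w → G.Adj u w := by
  constructor
  · intro h u v w hu hv hw huv hvw huw
    have huv' : (G.induce S).Adj ⟨u, hu⟩ ⟨v, hv⟩ := huv
    have hvw' : (G.induce S).Adj ⟨v, hv⟩ ⟨w, hw⟩ := hvw
    exact h u w ⟨hu, hw, huv'.reachable.trans hvw'.reachable⟩ huw
  · rintro h v w ⟨hv, hw, ⟨p⟩⟩ hvw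
    suffices ∀ {a b : S}, (G.induce S).Walk a b → (a : V) = b ∨ G.Adj a b from
      (this p).resolve_left hvw
    intro a b q
    induction q with
    | nil => exact .inl rfl
    | @cons a c b hac _ ih =>
      rcases ih with hcb | hcb
      · rw [← hcb]
        exact .inr hac
      · by_cases hab : (a : V) = b
        · exact .inl hab
        · exact .inr (h a.2 c.2 b.2 hac hcb hab)

theorem IsClusterSet.comap {G : SimpleGraph V} {H : SimpleGraph W} {S : Set V}
    (h : IsClusterSet G S) (f : H ↪g G) : IsClusterSet H (f ⁻¹' S) :=
  isClusterSet_iff.2 fun _ _ _ hu hv hw huv hvw huw =>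
    f.map_adj_iff.1 <| isClusterSet_iff.1 h hu hv hw (f.map_adj_iff.2 huv)
      (f.map_adj_iff.2 hvw) (f.injective.ne huw)

def copyEmbedding (F : SimpleGraph W) {ℓ : ℕ} (i : Fin ℓ) : F ↪g copies F ℓ where
  toFun x := (i, x)
  inj' _ _ h := congrArg Prod.snd h
  map_rel_iff' := and_iff_right rfl

def IsMonopolar (G : SimpleGraph V) : Prop :=
  ∃ S : Set V, IsClusterSet G S ∧ G.IsIndepSet Sᶜ

theorem isIndepSet_of_isClusterSet_compl_copies {F : SimpleGraph W} {ℓ : ℕ} {T : Set (Fin ℓ × W)}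
    (hT : IsClusterSet (copies F ℓ)ᶜ T) {i j : Fin ℓ} (hij : i ≠ j) {z : W} (hz : (j, z) ∈ T) :
    F.IsIndepSet {x | (i, x) ∈ T} := by
  intro x hx y hy hxy hadj
  have across : ∀ {a b : W}, (copies F ℓ)ᶜ.Adj (i, a) (j, b) := by
    simp only [compl_adj, ne_eq]
    exact ⟨fun h => hij (congrArg Prod.fst h), fun h => hij h.1⟩
  have hxy' := isClusterSet_iff.1 hT hx hz hy across across.symm
    (fun h => hxy (congrArg Prod.snd h))
  exact (compl_adj _ _ _).1 hxy' |>.2 ⟨rfl, hadj⟩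

theorem not_isPolar_copies_of_not_isMonopolar {F : SimpleGraph W} (hF : ¬ IsMonopolar F)
    {ℓ : ℕ} (hℓ : 2 ≤ ℓ) : ¬ IsPolar (copies F ℓ) := by
  rintro ⟨S, hS, hSc⟩
  let i : Fin ℓ := ⟨0, by omega⟩
  let j : Fin ℓ := ⟨1, by omega⟩
  by_cases hmeets : ∃ z, (j, z) ∉ S
  · obtain ⟨z, hz⟩ := hmeets
    exact hF ⟨_, hS.comap (copyEmbedding F i),
      isIndepSet_of_isClusterSet_compl_copies hSc (show i ≠ j by simp [i, j, Fin.ext_iff]) hz⟩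
  · push Not at hmeets
    have hcopy : copyEmbedding F j ⁻¹' S = Set.univ := Set.eq_univ_of_forall hmeets
    refine hF ⟨Set.univ, hcopy ▸ hS.comap (copyEmbedding F j), ?_⟩
    simp

instance : DecidableRel Fgraph.Adj := by
  unfold Fgraph
  infer_instance

set_option synthInstance.maxSize 2000 in
theorem Fgraph_isPolar : IsPolar Fgraph := by
  refine ⟨{0, 4, 5}, ?_, ?_⟩ <;> rw [isClusterSet_iff] <;> decide

-- If `v₁` lies in the cluster part, that part is a clique (`v₁` is universal), so it misses both
-- ends of `v₂v₃` or of `v₅v₆`; otherwise the cluster part contains the induced path `v₃v₂v₄`.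
theorem Fgraph_not_isMonopolar : ¬ IsMonopolar Fgraph := by
  have splittings : ∀ S : Finset (Fin 6), (∀ u ∉ S, ∀ v ∉ S, ¬ Fgraph.Adj u v) →
      ∃ u ∈ S, ∃ v ∈ S, ∃ w ∈ S,
        Fgraph.Adj u v ∧ Fgraph.Adj v w ∧ u ≠ w ∧ ¬ Fgraph.Adj u w := by
    decide
  rintro ⟨S, hS, hI⟩
  classical
  obtain ⟨u, hu, v, hv, w, hw, huv, hvw, huw, hnuw⟩ :=
    splittings {x | x ∈ S} fun u hu v hv => by
      simp only [Finset.mem_filter, Finset.mem_univ, true_and] at hu hv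
      by_cases huv : u = v
      · exact huv ▸ Fgraph.irrefl
      · exact hI hu hv huv
  simp only [Finset.mem_filter, Finset.mem_univ, true_and] at hu hv hw
  exact hnuw (isClusterSet_iff.1 hS hu hv hw huv hvw huw)

theorem stmt_15 : IsPolar Fgraph ∧ ¬ IsPolar (copies Fgraph 2) :=
  ⟨Fgraph_isPolar, not_isPolar_copies_of_not_isMonopolar Fgraph_not_isMonopolar le_rfl⟩
end

section
/- Let G be a finite simple graph such that every connected component H of G contains a vertex c with the property that every connected component of H − c (the induced subgraph of H obtained by deleting c) has at most two vertices. Then the vertex set of G can be partitioned into a set S₁ that is a cluster set of G and a set S₂ that is an independent set of G. In particular, G is a polar graph. -/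
/-- Transfer of induced reachability to a subset closed under adjacency within `S`. -/
lemma inducedReach_mono {V : Type*} (G : SimpleGraph V) (S T : Set V) (hTS : T ⊆ S)
    (hcl : ∀ a b, a ∈ T → b ∈ S → G.Adj a b → b ∈ T) (v w : V) (hvT : v ∈ T)
    (hr : InducedReach G S v w) : InducedReach G T v w := by
  obtain ⟨hv, hw, hreach⟩ := hr
  rw [SimpleGraph.reachable_iff_reflTransGen] at hreach
  have key : ∀ y : S, Relation.ReflTransGen (G.induce S).Adj ⟨v, hv⟩ y →
      InducedReach G T v y := by
    intro y hy
    induction hy with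
    | refl => exact ⟨hvT, hvT, SimpleGraph.Reachable.refl _⟩
    | tail _ hadj ih =>
      rename_i b c _
      obtain ⟨hv', hb, hreach'⟩ := ih
      have hGadj : G.Adj (b : V) (c : V) := hadj
      have hcT : (c : V) ∈ T := hcl b c hb c.2 hGadj
      refine ⟨hvT, hcT, hreach'.trans ?_⟩
      exact SimpleGraph.Adj.reachable (by exact hGadj : (G.induce T).Adj ⟨b, hb⟩ ⟨c, hcT⟩)
  exact key ⟨w, hw⟩ hreach

lemma adj_of_small_comp {V : Type*} (G : SimpleGraph V) (S : Set V) (v : V)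
    (hsmall : (indComp G S v).ncard ≤ 2) [Fintype V] :
    ∀ w, InducedReach G S v w → v ≠ w → G.Adj v w := by
  have key : ∀ w, InducedReach G S v w → w = v ∨ G.Adj v w := by
    rintro w ⟨hv, hw, hreach⟩
    rw [SimpleGraph.reachable_iff_reflTransGen] at hreach
    have : ∀ y : S, Relation.ReflTransGen (G.induce S).Adj ⟨v, hv⟩ y →
        (y : V) = v ∨ G.Adj v y := by
      intro y hy
      induction hy with
      | refl => exact Or.inl rfl
      | tail hrb hadj ih =>
        rename_i b c
        have hGbc : G.Adj (b : V) (c : V) := hadj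
        rcases ih with hb | hvb
        · right; rw [← hb]; exact hGbc
        · -- v, b, c all in indComp G S v
          have hmb : (b : V) ∈ indComp G S v :=
            ⟨hv, b.2, by rw [SimpleGraph.reachable_iff_reflTransGen]; exact hrb⟩
          have hmc : (c : V) ∈ indComp G S v :=
            ⟨hv, c.2, by rw [SimpleGraph.reachable_iff_reflTransGen]; exact hrb.tail hadj⟩
          have hmv : v ∈ indComp G S v := ⟨hv, hv, SimpleGraph.Reachable.refl _⟩
          by_cases hcv : (c : V) = v
          · exact Or.inl hcv
          by_cases hcb : (c : V) = (b : V)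
          · right; rw [hcb]; exact hvb
          · exfalso
            have hvb' : v ≠ (b : V) := fun hveq => G.irrefl (hveq ▸ hvb)
            have hsub : ({v, (b : V), (c : V)} : Set V) ⊆ indComp G S v := by
              intro x hx
              rcases hx with rfl | rfl | rfl
              · exact hmv
              · exact hmb
              · exact hmc
            have h3 : ({v, (b : V), (c : V)} : Set V).ncard = 3 := by
              rw [Set.ncard_insert_of_notMem, Set.ncard_insert_of_notMem,
                Set.ncard_singleton]
              · simpa using fun h : (b:V) = c => hcb h.symm
              · simp only [Set.mem_insert_iff, Set.mem_singleton_iff]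
                push_neg
                exact ⟨hvb', fun hv' => hcv hv'.symm⟩
            have := Set.ncard_le_ncard hsub (Set.toFinite _)
            omega
    exact this ⟨w, hw⟩ hreach
  intro w hr hne
  rcases key w hr with rfl | hadj
  · exact absurd rfl hne
  · exact hadj

theorem stmt_16 {V : Type*} [Fintype V] (G : SimpleGraph V)
    (h : ∀ H : G.ConnectedComponent, ∃ c ∈ H.supp,
      ∀ v ∈ H.supp \ {c}, (indComp G (H.supp \ {c}) v).ncard ≤ 2) :
    (∃ S : Set V, IsClusterSet G S ∧ ∀ v ∈ Sᶜ, ∀ w ∈ Sᶜ, ¬ G.Adj v w) ∧ IsPolar G := by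
  choose c hc hsm using h
  set S : Set V := {v | v ≠ c (G.connectedComponentMk v)} with hS
  have hcomp_mem : ∀ v : V, v ∈ (G.connectedComponentMk v).supp := fun v => rfl
  have hcluster : IsClusterSet G S := by
    intro v w hr hne
    set H := G.connectedComponentMk v with hH
    set T : Set V := H.supp \ {c H} with hT
    have hTS : T ⊆ S := by
      rintro a ⟨haH, hane⟩
      have : G.connectedComponentMk a = H := haH
      simpa [hS, this] using hane
    have hcl : ∀ a b, a ∈ T → b ∈ S → G.Adj a b → b ∈ T := by
      rintro a b ⟨haH, _⟩ hbS hab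
      have hbH : G.connectedComponentMk b = H := by
        rw [← (SimpleGraph.ConnectedComponent.mem_supp_iff _ _).mp haH]
        exact (SimpleGraph.ConnectedComponent.connectedComponentMk_eq_of_adj hab).symm
      constructor
      · exact hbH
      · simpa [hS, hbH] using hbS
    have hvT : v ∈ T := ⟨hcomp_mem v, by simpa [hS] using (show v ∈ S from hr.1)⟩
    have hrT : InducedReach G T v w := inducedReach_mono G S T hTS hcl v w hvT hr
    exact adj_of_small_comp G T v (hsm H v hvT) w hrT hne
  have hindep : ∀ v ∈ Sᶜ, ∀ w ∈ Sᶜ, ¬ G.Adj v w := by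
    intro v hv w hw hadj
    simp only [hS, Set.mem_compl_iff, Set.mem_setOf_eq, not_not] at hv hw
    have : G.connectedComponentMk v = G.connectedComponentMk w :=
      SimpleGraph.ConnectedComponent.connectedComponentMk_eq_of_adj hadj
    exact G.ne_of_adj hadj (by rw [hv, hw, this])
  refine ⟨⟨S, hcluster, hindep⟩, ⟨S, hcluster, ?_⟩⟩
  rintro v w ⟨hv, hw, _⟩ hne
  exact ⟨hne, hindep v hv w hw⟩
end
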